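/- arXiv:1610.07320 — 2 statements merged into one kernel-verified Lean document; each statement's English description precedes it below -/
import Mathlib

section
/- Let G=(V,E) be a finite connected simple graph of diameter D and (X_t)_{t≥0} the 3-color CCA trajectory of an initial 3-coloring X_0 : V → ℤ/3ℤ. If dX_0 is irrotational, then X_t(x) = X_t(y) for all vertices x, y ∈ V and all times t ≥ D. -/
noncomputable section
attribute [local instance] Classical.propDecidable

open Filter

variable {V : Type*}

/-- Unique representative in `{-1,0,1}` of an element of `ℤ/3ℤ`. -/
def ZMod.repInt (a : ZMod 3) : ℤ := if a = 0 then 0 else if a = 1 then 1 else -1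

/-- One step of the 3-color cyclic cellular automaton. -/
def ccaStep (G : SimpleGraph V) (X : V → ZMod 3) : V → ZMod 3 :=
  fun v => if ∃ u, G.Adj v u ∧ X u = X v + 1 then X v + 1 else X v

/-- The CCA trajectory started from `X₀`. -/
def ccaTraj (G : SimpleGraph V) (X₀ : V → ZMod 3) : ℕ → V → ZMod 3 :=
  fun t => (ccaStep G)^[t] X₀

/-- A vertex is excited at time `t` for CCA iff its color advances. -/
def ccaExcited (G : SimpleGraph V) (X₀ : V → ZMod 3) (t : ℕ) (v : V) : Prop :=
  ccaTraj G X₀ (t + 1) v = ccaTraj G X₀ t v + 1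

/-- Number of excitations of `x` at times `0, …, t-1` (CCA). -/
def ccaNe (G : SimpleGraph V) (X₀ : V → ZMod 3) (t : ℕ) (x : V) : ℕ :=
  ((Finset.range t).filter fun s => ccaExcited G X₀ s x).card

/-- The CCA 1-form `dX` on ordered pairs of vertices. -/
def dXcca (X : V → ZMod 3) (u v : V) : ℤ := (X v - X u).repInt

/-- Path integral of the CCA 1-form along a walk. -/
def walkIntCCA {G : SimpleGraph V} (X : V → ZMod 3) {x y : V} (w : G.Walk x y) : ℤ :=
  (w.darts.map fun d => dXcca X d.toProd.1 d.toProd.2).sum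


/-!
Irrotationality makes `dX₀` exact: `X₀ = c + h (mod 3)` for an integer height `h` that changes
by at most one along every edge. On such heights the CCA lifts to `ccaLift` (a vertex advances
iff a neighbour is exactly one higher), which keeps that property. Under the lift no height
exceeds `max h`, while a vertex reaches the initial height of any vertex at distance `d` within
`d` steps, so from time `D` on every height is `max h` and all colors agree.
-/

open SimpleGraph Walk

namespace ZMod

lemma repInt_neg (a : ZMod 3) : (-a).repInt = -a.repInt := by revert a; decide

lemma intCast_repInt (a : ZMod 3) : (a.repInt : ZMod 3) = a := by revert a; decide

lemma repInt_le_one (a : ZMod 3) : a.repInt ≤ 1 := by revert a; decide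

lemma intCast_eq_add_one_iff {a b : ℤ} (hb : b ≤ a + 1) (ha : a ≤ b + 1) :
    (b : ZMod 3) = a + 1 ↔ b = a + 1 := by
  refine ⟨fun h => ?_, fun h => by rw [h]; push_cast; rfl⟩
  obtain rfl | rfl | rfl : b = a - 1 ∨ b = a ∨ b = a + 1 := by omega
  · have : ((-1 : ℤ) : ZMod 3) = 1 := by rw [← sub_eq_iff_eq_add'.mpr h]; push_cast; ring
    exact absurd this (by decide)
  · exact absurd (left_eq_add.mp h) one_ne_zero
  · rfl

end ZMod

section WalkIntegral

variable {G : SimpleGraph V} (X : V → ZMod 3)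

lemma dXcca_swap (u v : V) : dXcca X v u = -dXcca X u v := by
  rw [dXcca, dXcca, ← ZMod.repInt_neg, neg_sub]

@[simp]
lemma walkIntCCA_nil {v : V} : walkIntCCA X (nil : G.Walk v v) = 0 := rfl

@[simp]
lemma walkIntCCA_cons {u v w : V} (h : G.Adj u v) (p : G.Walk v w) :
    walkIntCCA X (cons h p) = dXcca X u v + walkIntCCA X p := by
  simp [walkIntCCA]

@[simp]
lemma walkIntCCA_append {u v w : V} (p : G.Walk u v) (q : G.Walk v w) :
    walkIntCCA X (p.append q) = walkIntCCA X p + walkIntCCA X q := by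
  simp [walkIntCCA]

@[simp]
lemma walkIntCCA_reverse {u v : V} (p : G.Walk u v) :
    walkIntCCA X p.reverse = -walkIntCCA X p := by
  induction p with
  | nil => rfl
  | cons h p ih =>
    rw [reverse_cons, walkIntCCA_append, ih, walkIntCCA_cons, walkIntCCA_cons, walkIntCCA_nil,
      dXcca_swap]
    ring

lemma apply_eq_add_walkIntCCA {u v : V} (p : G.Walk u v) :
    X v = X u + walkIntCCA X p := by
  induction p with
  | nil => simp
  | cons h p ih =>
    simp only [walkIntCCA_cons, dXcca, ih]
    push_cast
    rw [ZMod.intCast_repInt]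
    ring

def IsIrrotational (G : SimpleGraph V) (X : V → ZMod 3) : Prop :=
  ∀ (v : V) (c : G.Walk v v), c.IsCycle → walkIntCCA X c = 0

variable {X}

namespace IsIrrotational

/-- A closed walk that is a path after its first step is either a cycle or runs back along
its first edge. -/
lemma walkIntCCA_cons_eq_zero (hX : IsIrrotational G X) {u v : V} (h : G.Adj u v)
    {p : G.Walk v u} (hp : p.IsPath) : walkIntCCA X (cons h p) = 0 := by
  by_cases hedge : s(u, v) ∈ p.edges
  · cases p with
    | nil => exact absurd h G.irrefl
    | cons h' q =>
      rename_i x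
      obtain ⟨hq, hvq⟩ := (cons_isPath_iff h' q).mp hp
      rcases List.mem_cons.mp (edges_cons h' q ▸ hedge) with huv | huv
      · obtain rfl : u = x := by
          rcases Sym2.eq_iff.mp huv with ⟨rfl, -⟩ | ⟨rfl, -⟩
          exacts [absurd h G.irrefl, rfl]
        rw [(isPath_iff_nil.mp hq).eq_nil, walkIntCCA_cons, walkIntCCA_cons, walkIntCCA_nil,
          dXcca_swap X v]
        ring
      · exact absurd (q.snd_mem_support_of_mem_edges huv) hvq
  · exact hX u _ ((cons_isCycle_iff p h).mpr ⟨hp, hedge⟩)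

lemma walkIntCCA_bypass (hX : IsIrrotational G X) {u v : V} (p : G.Walk u v) :
    walkIntCCA X p.bypass = walkIntCCA X p := by
  induction p with
  | nil => rfl
  | cons h p ih =>
    rw [bypass]
    split_ifs with hs
    · have hsplit := congrArg (walkIntCCA X) (p.bypass.take_spec hs)
      have hloop := hX.walkIntCCA_cons_eq_zero h ((bypass_isPath p).takeUntil hs)
      rw [walkIntCCA_append, ih] at hsplit
      rw [walkIntCCA_cons] at hloop ⊢
      linarith
    · simp [ih]

lemma walkIntCCA_eq_zero (hX : IsIrrotational G X) {v : V} (c : G.Walk v v) :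
    walkIntCCA X c = 0 := by
  rw [← hX.walkIntCCA_bypass, (isPath_iff_nil.mp c.bypass_isPath).eq_nil, walkIntCCA_nil]

end IsIrrotational

end WalkIntegral

section Lift

def EdgeLipschitz (G : SimpleGraph V) (h : V → ℤ) : Prop :=
  ∀ ⦃u v : V⦄, G.Adj u v → h v ≤ h u + 1

def ccaLift (G : SimpleGraph V) (h : V → ℤ) : V → ℤ :=
  fun v => if ∃ u, G.Adj v u ∧ h u = h v + 1 then h v + 1 else h v

variable {G : SimpleGraph V} {h : V → ℤ}

lemma le_ccaLift (v : V) : h v ≤ ccaLift G h v := by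
  unfold ccaLift; split_ifs <;> omega

lemma ccaLift_le_add_one (v : V) : ccaLift G h v ≤ h v + 1 := by
  unfold ccaLift; split_ifs <;> omega

lemma ccaLift_le_of_forall_le {M : ℤ} (hM : ∀ v, h v ≤ M) (v : V) : ccaLift G h v ≤ M := by
  unfold ccaLift
  split_ifs with hv
  · obtain ⟨u, -, hu⟩ := hv
    exact hu ▸ hM u
  · exact hM v

lemma iterate_ccaLift_le_of_forall_le {M : ℤ} (hM : ∀ v, h v ≤ M) (t : ℕ) (v : V) :
    (ccaLift G)^[t] h v ≤ M := by
  induction t generalizing v with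
  | zero => exact hM v
  | succ t ih => rw [Function.iterate_succ_apply']; exact ccaLift_le_of_forall_le ih v

lemma le_iterate_ccaLift (t : ℕ) (v : V) : h v ≤ (ccaLift G)^[t] h v := by
  induction t with
  | zero => rfl
  | succ t ih => rw [Function.iterate_succ_apply']; exact ih.trans (le_ccaLift v)

namespace EdgeLipschitz

lemma le_ccaLift_of_adj (hh : EdgeLipschitz G h) {u v : V} (huv : G.Adj v u) :
    h u ≤ ccaLift G h v := by
  by_cases hu : h u = h v + 1
  · unfold ccaLift
    rw [if_pos ⟨u, huv, hu⟩, hu]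
  · have := hh huv
    have := le_ccaLift (G := G) (h := h) v
    omega

lemma ccaLift_edgeLipschitz (hh : EdgeLipschitz G h) : EdgeLipschitz G (ccaLift G h) :=
  fun _ v huv => (ccaLift_le_add_one v).trans (by linarith [hh.le_ccaLift_of_adj huv])

lemma iterate_ccaLift_edgeLipschitz (hh : EdgeLipschitz G h) (t : ℕ) :
    EdgeLipschitz G ((ccaLift G)^[t] h) := by
  induction t with
  | zero => exact hh
  | succ t ih => rw [Function.iterate_succ_apply']; exact ih.ccaLift_edgeLipschitz

lemma le_iterate_ccaLift_of_walk (hh : EdgeLipschitz G h) {u v : V} (p : G.Walk v u) {t : ℕ}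
    (hp : p.length ≤ t) : h u ≤ (ccaLift G)^[t] h v := by
  induction p generalizing t with
  | nil => exact le_iterate_ccaLift t _
  | cons hvw q ih =>
    rw [length_cons] at hp
    obtain ⟨s, rfl⟩ : ∃ s, t = s + 1 := ⟨t - 1, by omega⟩
    rw [Function.iterate_succ_apply']
    exact (ih (by omega)).trans ((hh.iterate_ccaLift_edgeLipschitz s).le_ccaLift_of_adj hvw)

lemma ccaStep_intCast (hh : EdgeLipschitz G h) (c : ZMod 3) :
    ccaStep G (fun v => c + h v) = fun v => c + ccaLift G h v := by
  funext v
  have hexc : (∃ u, G.Adj v u ∧ c + (h u : ZMod 3) = c + h v + 1) ↔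
      ∃ u, G.Adj v u ∧ h u = h v + 1 := by
    refine exists_congr fun u => and_congr_right fun hvu => ?_
    rw [add_assoc, add_right_inj, ZMod.intCast_eq_add_one_iff (hh hvu) (hh hvu.symm)]
  simp only [ccaStep, ccaLift, hexc]
  split_ifs <;> push_cast <;> ring

lemma ccaTraj_intCast (hh : EdgeLipschitz G h) (c : ZMod 3) (t : ℕ) :
    ccaTraj G (fun v => c + h v) t = fun v => c + (ccaLift G)^[t] h v := by
  induction t with
  | zero => rfl
  | succ t ih =>
    simp only [ccaTraj] at ih ⊢
    rw [Function.iterate_succ_apply', ih, (hh.iterate_ccaLift_edgeLipschitz t).ccaStep_intCast,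
      Function.iterate_succ_apply']

end EdgeLipschitz

end Lift

lemma IsIrrotational.exists_edgeLipschitz_lift {G : SimpleGraph V} {X : V → ZMod 3}
    (hX : IsIrrotational G X) (hG : G.Connected) :
    ∃ (c : ZMod 3) (h : V → ℤ), EdgeLipschitz G h ∧ X = fun v => c + h v := by
  obtain ⟨r⟩ := hG.nonempty
  let h : V → ℤ := fun v => walkIntCCA X (hG.preconnected r v).some
  refine ⟨X r, h, fun u v huv => ?_, funext fun v => apply_eq_add_walkIntCCA X _⟩
  have hloop := hX.walkIntCCA_eq_zero
    ((hG.preconnected r u).some.append (cons huv (hG.preconnected r v).some.reverse))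
  rw [walkIntCCA_append, walkIntCCA_cons, walkIntCCA_reverse] at hloop
  have := (X v - X u).repInt_le_one
  simp only [h, dXcca] at hloop this ⊢
  omega

/-- On a finite connected graph of diameter `D`, if `dX₀` is irrotational then all
vertices share the same color at every time `t ≥ D`. -/
theorem cca_irrotational_synchronizes_by_diameter [Fintype V] (G : SimpleGraph V)
    (hconn : G.Connected) (X₀ : V → ZMod 3)
    (hirr : ∀ (v : V) (c : G.Walk v v), c.IsCycle → walkIntCCA X₀ c = 0) :
    ∀ (t : ℕ), G.diam ≤ t → ∀ x y : V, ccaTraj G X₀ t x = ccaTraj G X₀ t y := by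
  intro t ht x y
  obtain ⟨c, h, hh, rfl⟩ := IsIrrotational.exists_edgeLipschitz_lift hirr hconn
  have : Nonempty V := hconn.nonempty
  obtain ⟨u, hu⟩ := Finite.exists_max h
  have hdiam : G.ediam ≠ ⊤ := G.connected_iff_ediam_ne_top.mp hconn
  have hsync : ∀ v, (ccaLift G)^[t] h v = h u := fun v => by
    obtain ⟨p, hp⟩ := hconn.exists_walk_length_eq_dist v u
    exact le_antisymm (iterate_ccaLift_le_of_forall_le hu t v)
      (hh.le_iterate_ccaLift_of_walk p (hp ▸ (G.dist_le_diam hdiam).trans ht))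
  simp only [hh.ccaTraj_intCast, hsync]
end
end

section
/- Let G=(V,E) be a connected simple graph containing at least one cycle, and let X_0 be a random 3-coloring of V drawn from the uniform product measure on (ℤ/3ℤ)^V. Then, with positive probability, the 3-color CCA trajectory (X_t)_{t≥0} oscillates, i.e., its activity α is strictly positive. -/
noncomputable section
attribute [local instance] Classical.propDecidable

open Filter MeasureTheory

variable {V : Type*}

/-!
Read the color difference across each edge in `{-1, 0, 1}` and sum it along a closed walk. This
winding number is conserved by the CCA: across an edge the difference changes by exactly the
difference of the two excitation indicators, which telescopes. Coloring a cycle `0, 1, 2, 0, …`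
gives it positive winding number, an event of positive probability, and a closed walk of positive
winding number always contains a vertex about to be excited. So the cycle vertices together are
excited at least `t` times before time `t`. Since excitation counts of vertices at distance `d`
differ by at most `2d`, every vertex has positive activity.
-/
namespace ZMod

lemma valMinAbs_sub_le_zero_of_ne_add_one {x y : ZMod 3} (h : y ≠ x + 1) :
    (y - x).valMinAbs ≤ 0 := by
  revert x y; decide

/-- Across an edge the lower endpoint advances whenever the other is one step ahead, so the
difference never wraps around between `1` and `-1`. -/
lemma valMinAbs_sub_of_advance {x x' y y' : ZMod 3} (hx : x' = x ∨ x' = x + 1)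
    (hy : y' = y ∨ y' = y + 1) (hxy : y = x + 1 → x' = x + 1) (hyx : x = y + 1 → y' = y + 1) :
    (y' - x').valMinAbs =
      (y - x).valMinAbs + (if y' = y + 1 then 1 else 0) - (if x' = x + 1 then 1 else 0) := by
  revert x x' y y'; decide

end ZMod

section CCA

open SimpleGraph

variable {G : SimpleGraph V}

lemma ccaStep_eq_or_eq_add_one (X : V → ZMod 3) (v : V) :
    ccaStep G X v = X v ∨ ccaStep G X v = X v + 1 := by
  unfold ccaStep; split_ifs <;> simp

lemma ccaStep_eq_add_one_of_adj {X : V → ZMod 3} {u v : V} (h : G.Adj v u)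
    (hu : X u = X v + 1) : ccaStep G X v = X v + 1 :=
  if_pos ⟨u, h, hu⟩

lemma ccaTraj_succ (ω : V → ZMod 3) (t : ℕ) :
    ccaTraj G ω (t + 1) = ccaStep G (ccaTraj G ω t) :=
  Function.iterate_succ_apply' _ _ _

lemma ccaExcited_iff {ω : V → ZMod 3} {t : ℕ} {v : V} :
    ccaExcited G ω t v ↔ ccaStep G (ccaTraj G ω t) v = ccaTraj G ω t v + 1 := by
  rw [ccaExcited, ccaTraj_succ]

lemma ccaNe_succ (ω : V → ZMod 3) (t : ℕ) (x : V) :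
    ccaNe G ω (t + 1) x = ccaNe G ω t x + if ccaExcited G ω t x then 1 else 0 := by
  simp only [ccaNe, Finset.card_filter, Finset.sum_range_succ]

lemma ccaNe_le_self (ω : V → ZMod 3) (t : ℕ) (x : V) : ccaNe G ω t x ≤ t :=
  (Finset.card_filter_le _ _).trans (Finset.card_range t).le

def winding (X : V → ZMod 3) : ∀ {u w : V}, G.Walk u w → ℤ
  | _, _, .nil => 0
  | _, _, .cons (u := u) (v := v) _ p => (X v - X u).valMinAbs + winding X p

lemma winding_cons (X : V → ZMod 3) {u v w : V} (h : G.Adj u v) (p : G.Walk v w) :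
    winding X (.cons h p) = (X v - X u).valMinAbs + winding X p := rfl

lemma abs_winding_le (X : V → ZMod 3) {u w : V} (p : G.Walk u w) :
    |winding X p| ≤ p.length := by
  induction p with
  | nil => simp [winding]
  | @cons a b _ h p ih =>
    have hd : |(X b - X a).valMinAbs| ≤ 1 := by
      rw [Int.abs_eq_natAbs]; exact_mod_cast ZMod.natAbs_valMinAbs_le _
    rw [winding_cons, Walk.length_cons]
    push_cast
    exact (abs_add_le _ _).trans (by linarith)

lemma winding_ccaStep (X : V → ZMod 3) {u w : V} (p : G.Walk u w) :
    winding (ccaStep G X) p = winding X p + (if ccaStep G X w = X w + 1 then 1 else 0)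
      - (if ccaStep G X u = X u + 1 then 1 else 0) := by
  induction p with
  | nil => simp [winding]
  | cons h p ih =>
    rw [winding_cons, winding_cons, ih,
      ZMod.valMinAbs_sub_of_advance (ccaStep_eq_or_eq_add_one X _) (ccaStep_eq_or_eq_add_one X _)
        (ccaStep_eq_add_one_of_adj h) (ccaStep_eq_add_one_of_adj h.symm)]
    ring

lemma winding_ccaTraj (ω : V → ZMod 3) {u w : V} (p : G.Walk u w) (t : ℕ) :
    winding (ccaTraj G ω t) p = winding ω p + ccaNe G ω t w - ccaNe G ω t u := by
  induction t with
  | zero => simp [ccaNe, ccaTraj]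
  | succ t ih =>
    simp only [ccaTraj_succ, winding_ccaStep, ih, ccaNe_succ, ← ccaExcited_iff]
    push_cast
    ring

lemma ccaNe_le_add_of_walk (ω : V → ZMod 3) {u w : V} (p : G.Walk u w) (t : ℕ) :
    ccaNe G ω t w ≤ ccaNe G ω t u + 2 * p.length := by
  have h₀ := abs_le.mp (abs_winding_le ω p)
  have hₜ := abs_le.mp (abs_winding_le (ccaTraj G ω t) p)
  rw [winding_ccaTraj] at hₜ
  omega

lemma exists_mem_support_ccaStep_eq_add_one {X : V → ZMod 3} {u w : V} (p : G.Walk u w)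
    (hp : 0 < winding X p) : ∃ v ∈ p.support, ccaStep G X v = X v + 1 := by
  induction p with
  | nil => simp [winding] at hp
  | @cons u v w h p ih =>
    rw [winding_cons] at hp
    by_cases hv : X v = X u + 1
    · exact ⟨u, p.support.mem_cons_self .., ccaStep_eq_add_one_of_adj h hv⟩
    · obtain ⟨x, hx, hadv⟩ := ih (by linarith [ZMod.valMinAbs_sub_le_zero_of_ne_add_one hv])
      exact ⟨x, List.mem_cons_of_mem _ hx, hadv⟩

lemma SimpleGraph.Walk.IsPath.exists_winding_eq_length {u w : V} {p : G.Walk u w}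
    (hp : p.IsPath) :
    ∃ κ : V → ZMod 3, ∀ X : V → ZMod 3, (∀ v ∈ p.support, X v = κ v) →
      winding X p = p.length := by
  induction p with
  | nil => exact ⟨0, fun X _ => rfl⟩
  | @cons u v w h p ih =>
    rw [Walk.cons_isPath_iff] at hp
    obtain ⟨κ, hκ⟩ := ih hp.1
    refine ⟨Function.update κ u (κ v - 1), fun X hX => ?_⟩
    have hXp : ∀ x ∈ p.support, X x = κ x := fun x hx => by
      rw [hX x (List.mem_cons_of_mem _ hx), Function.update_of_ne (ne_of_mem_of_not_mem hx hp.2)]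
    have hXu : X u = κ v - 1 := by simpa using hX u (List.mem_cons_self ..)
    rw [winding_cons, hκ X hXp, hXp v p.start_mem_support, hXu, sub_sub_cancel,
      Walk.length_cons, show (1 : ZMod 3).valMinAbs = 1 from rfl, add_comm]
    exact (Nat.cast_succ _).symm

lemma SimpleGraph.Walk.IsCycle.exists_winding_pos {v : V} {c : G.Walk v v} (hc : c.IsCycle) :
    ∃ κ : V → ZMod 3, ∀ X : V → ZMod 3, (∀ u ∈ c.support, X u = κ u) →
      0 < winding X c := by
  cases c with
  | nil => exact absurd hc Walk.not_isCycle_nil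
  | cons h p =>
    have hlen := hc.three_le_length
    rw [Walk.cons_isCycle_iff] at hc
    obtain ⟨κ, hκ⟩ := hc.1.exists_winding_eq_length
    refine ⟨κ, fun X hX => ?_⟩
    have hd := abs_le.mp (abs_winding_le X (.cons h .nil : G.Walk v _))
    rw [winding_cons, hκ X fun x hx => hX x (List.mem_cons_of_mem _ hx)]
    simp only [winding, Walk.length_cons, Walk.length_nil] at hd hlen
    omega

lemma le_sum_ccaNe {ω : V → ZMod 3} (S : Finset V) (hS : ∀ t, ∃ u ∈ S, ccaExcited G ω t u)
    (t : ℕ) : t ≤ ∑ u ∈ S, ccaNe G ω t u := by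
  induction t with
  | zero => exact Nat.zero_le _
  | succ t ih =>
    obtain ⟨u, hu, hexc⟩ := hS t
    have hstep := Finset.single_le_sum
      (f := fun x => if ccaExcited G ω t x then 1 else 0) (fun _ _ => Nat.zero_le _) hu
    simp only [if_pos hexc] at hstep
    simp only [ccaNe_succ, Finset.sum_add_distrib]
    omega

lemma limsup_div_pos_of_le_mul_add (f : ℕ → ℕ) (k C : ℕ) (hf : ∀ t, f t ≤ t)
    (h : ∀ t, t ≤ k * f t + C) : 0 < limsup (fun t : ℕ => (f t : ℝ) / t) atTop := by
  have hk : 0 < k := Nat.pos_of_ne_zero fun hk => by simpa [hk] using h (C + 1)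
  have hkR : (0 : ℝ) < k := by exact_mod_cast hk
  -- once `t ≥ 2C + 1`, the constant `C` costs at most half of `t`
  have hfreq : ∃ᶠ t : ℕ in atTop, 1 / (2 * k : ℝ) ≤ f t / t := by
    refine Eventually.frequently ((eventually_ge_atTop (2 * C + 1)).mono fun t ht => ?_)
    have htR : (0 : ℝ) < t := by exact_mod_cast (by omega : 0 < t)
    have hlin : t ≤ 2 * k * f t := by nlinarith [h t]
    have hlinR : (t : ℝ) ≤ 2 * k * f t := by exact_mod_cast hlin
    rw [div_le_div_iff₀ (by positivity) htR]
    linarith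
  refine (by positivity : (0 : ℝ) < 1 / (2 * k)).trans_le (le_limsup_of_frequently_le hfreq ?_)
  refine isBoundedUnder_of ⟨1, fun t => div_le_one_of_le₀ ?_ t.cast_nonneg⟩
  exact_mod_cast hf t

lemma limsup_ccaNe_div_pos {ω : V → ZMod 3} (hconn : G.Connected) (S : Finset V)
    (hS : ∀ t, ∃ u ∈ S, ccaExcited G ω t u) (x : V) :
    0 < limsup (fun t : ℕ => (ccaNe G ω t x : ℝ) / t) atTop := by
  refine limsup_div_pos_of_le_mul_add _ S.card (∑ u ∈ S, 2 * G.dist x u)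
    (ccaNe_le_self ω · x) fun t => ?_
  calc t ≤ ∑ u ∈ S, ccaNe G ω t u := le_sum_ccaNe S hS t
    _ ≤ ∑ u ∈ S, (ccaNe G ω t x + 2 * G.dist x u) := Finset.sum_le_sum fun u _ => by
        obtain ⟨p, hp⟩ := hconn.exists_walk_length_eq_dist x u
        exact hp ▸ ccaNe_le_add_of_walk ω p t
    _ = S.card * ccaNe G ω t x + ∑ u ∈ S, 2 * G.dist x u := by
        rw [Finset.sum_add_distrib, Finset.sum_const, smul_eq_mul]

end CCA

theorem cca_oscillates_with_positive_probability_general (G : SimpleGraph V)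
    (hconn : G.Connected)
    (v : V) (c : G.Walk v v) (hc : c.IsCycle)
    (μ : Measure (V → ZMod 3))
    (hμ : ∀ (s : Finset V) (κ : V → ZMod 3),
      μ {ω : V → ZMod 3 | ∀ u ∈ s, ω u = κ u} = (1 / 3 : ENNReal) ^ s.card) :
    0 < μ {ω : V → ZMod 3 |
      ∀ x : V, 0 < limsup (fun t : ℕ => (ccaNe G ω t x : ℝ) / t) atTop} := by
  obtain ⟨κ, hκ⟩ := hc.exists_winding_pos
  have hcyl : 0 < μ {ω | ∀ u ∈ c.support.toFinset, ω u = κ u} := by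
    rw [hμ]; exact ENNReal.pow_pos (by norm_num) _
  refine hcyl.trans_le <| measure_mono fun ω hω =>
    limsup_ccaNe_div_pos hconn c.support.toFinset fun t => ?_
  have hwind : 0 < winding (ccaTraj G ω t) c := by
    rw [winding_ccaTraj, add_sub_cancel_right]
    exact hκ ω fun u hu => hω u (List.mem_toFinset.mpr hu)
  obtain ⟨u, hu, hadv⟩ := exists_mem_support_ccaStep_eq_add_one c hwind
  exact ⟨u, List.mem_toFinset.mpr hu, ccaExcited_iff.mpr hadv⟩

/-- If a connected graph contains a cycle, then under the uniform product measure on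
initial 3-colorings the CCA trajectory oscillates (has strictly positive activity at
every vertex) with positive probability. -/
theorem cca_oscillates_with_positive_probability (G : SimpleGraph V)
    (hlf : ∀ v : V, (G.neighborSet v).Finite) (hconn : G.Connected)
    (v : V) (c : G.Walk v v) (hc : c.IsCycle)
    (μ : Measure (V → ZMod 3)) [IsProbabilityMeasure μ]
    (hμ : ∀ (s : Finset V) (κ : V → ZMod 3),
      μ {ω : V → ZMod 3 | ∀ u ∈ s, ω u = κ u} = (1 / 3 : ENNReal) ^ s.card) :
    0 < μ {ω : V → ZMod 3 |
      ∀ x : V, 0 < limsup (fun t : ℕ => (ccaNe G ω t x : ℝ) / t) atTop} :=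
  cca_oscillates_with_positive_probability_general G hconn v c hc μ hμ
end
end
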